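/- Let (X, ‖·‖) be a normed space and T : X → X a mapping. Suppose there exists r ∈ [0, 1) such that for all x, y ∈ X: f(r)‖x − Tx‖ ≤ ‖x − y‖ implies ‖Tx − Ty‖ ≤ r‖x − y‖. Then for every x ∈ X, ‖Tx − T²x‖ ≤ r‖x − Tx‖; and consequently, for every u ∈ X, the sequence of Picard iterates (Tⁿu)ₙ is a Cauchy sequence in X. -/
import Mathlib


/-- The function f from Suzuki's theorem: f(r) = 1 on [0, (√5−1)/2],
    (1−r)/r² on ((√5−1)/2, 1/√2), and 1/(1+r) on [1/√2, 1). -/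
noncomputable def suzukiF (r : ℝ) : ℝ :=
  if r ≤ (Real.sqrt 5 - 1) / 2 then 1
  else if r < 1 / Real.sqrt 2 then (1 - r) / r ^ 2
  else 1 / (1 + r)

theorem stmt_13 {X : Type*} [NormedAddCommGroup X] [NormedSpace ℝ X]
    (T : X → X) (r : ℝ) (hr0 : 0 ≤ r) (hr1 : r < 1)
    (H : ∀ x y : X, suzukiF r * ‖x - T x‖ ≤ ‖x - y‖ → ‖T x - T y‖ ≤ r * ‖x - y‖) :
    (∀ x : X, ‖T x - T (T x)‖ ≤ r * ‖x - T x‖) ∧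
    ∀ u : X, CauchySeq (fun n => T^[n] u) := by
  have hf1 : suzukiF r ≤ 1 := by
    unfold suzukiF
    have h5 : Real.sqrt 5 ^ 2 = 5 := Real.sq_sqrt (by norm_num)
    have h5n : 0 ≤ Real.sqrt 5 := Real.sqrt_nonneg 5
    split_ifs with h1 h2
    · exact le_refl 1
    · push_neg at h1
      have hrpos : 0 < r := by nlinarith
      rw [div_le_one (by positivity)]
      nlinarith
    · rw [div_le_one (by linarith)]; linarith
  have key : ∀ x : X, ‖T x - T (T x)‖ ≤ r * ‖x - T x‖ := by
    intro x
    exact H x (T x) (by nlinarith [norm_nonneg (x - T x)])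
  refine ⟨key, fun u => ?_⟩
  apply cauchySeq_of_le_geometric r ‖u - T u‖ hr1
  intro n
  rw [dist_eq_norm]
  induction n with
  | zero => simp
  | succ n ih =>
      rw [Function.iterate_succ_apply'] at ih
      rw [show T^[n+1+1] u = T (T (T^[n] u)) by
            rw [Function.iterate_succ_apply', Function.iterate_succ_apply'],
          Function.iterate_succ_apply']
      calc ‖T (T^[n] u) - T (T (T^[n] u))‖ ≤ r * ‖T^[n] u - T (T^[n] u)‖ := key _
        _ ≤ r * (‖u - T u‖ * r ^ n) := mul_le_mul_of_nonneg_left ih hr0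
        _ = ‖u - T u‖ * r ^ (n + 1) := by ring
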